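/- Let α ≤ ω₁ and write α = λ+2n+i with λ a limit ordinal or 0, n ∈ ω, i ∈ {0,1}, and set α' = λ+n. Then: (1) for every finite broom set B ∈ B_α, (i) D_iie^{α'}(B) is finite, and (ii) if α is even, D_iie^{α'}(B) is either empty or equal to {∅}; (2) for every infinite broom set A ∈ A_α, (i) D_iie^{α'}(D_iie(A)) is finite, and (ii) if α is even, D_iie^{α'}(D_iie(A)) is either empty or equal to {∅}. -/

import Mathlib

noncomputable section
open Classical Set Topology Filter Ordinal

universe u v

namespace FBorelPaper

/-! ### Ordinal parity -/

/-- The first uncountable ordinal. -/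
def omega1 : Ordinal.{0} := Ordinal.omega 1

/-- An ordinal `a = λ + m` (with `λ` limit or zero, `m < ω`) is *even* iff `m` is even. -/
def EvenOrd (a : Ordinal.{0}) : Prop := a % 2 = 0

/-- An ordinal `a = λ + m` (with `λ` limit or zero, `m < ω`) is *odd* iff `m` is odd. -/
def OddOrd (a : Ordinal.{0}) : Prop := a % 2 = 1

/-- For `a = λ + 2n + i` (with `λ` limit or zero, `n < ω`, `i ∈ {0,1}`),
`ordPrime a = λ + n` (the ordinal `α'` of the paper). -/
def ordPrime (a : Ordinal.{0}) : Ordinal.{0} :=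
  Ordinal.omega0 * (a / Ordinal.omega0) + (a % Ordinal.omega0) / 2

/-! ### The F-Borel hierarchy -/

/-- The `F`-Borel hierarchy of a topological space: `FBorel Y 0` is the family of closed
sets, and for `0 < a`, `FBorel Y a` consists of all countable unions (for odd `a`),
resp. countable intersections (for even `a`), of members of `⋃ b < a, FBorel Y b`. -/
def FBorel (Y : Type u) [TopologicalSpace Y] : Ordinal.{0} → Set (Set Y) :=
  WellFounded.fix Ordinal.lt_wf (C := fun _ => Set (Set Y)) fun a ih =>
    if a = 0 then { F | IsClosed F }
    else if EvenOrd a then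
      { S | ∃ f : ℕ → Set Y, (∀ n, ∃ b, ∃ h : b < a, f n ∈ ih b h) ∧ S = ⋂ n, f n }
    else
      { S | ∃ f : ℕ → Set Y, (∀ n, ∃ b, ∃ h : b < a, f n ∈ ih b h) ∧ S = ⋃ n, f n }

/-- The list `(σ 0, …, σ (k-1))` of the first `k` values of `σ : ℕ → ℕ`. -/
def seqPrefix (σ : ℕ → ℕ) (k : ℕ) : List ℕ := List.ofFn fun i : Fin k => σ i

/-- A Suslin scheme: a monotone family of sets indexed by finite sequences. -/
def IsSuslinScheme {Y : Type u} (C : List ℕ → Set Y) : Prop :=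
  ∀ ⦃s t : List ℕ⦄, s <+: t → C t ⊆ C s

/-- The Suslin operation `A(C) = ⋃_{σ ∈ ω^ω} ⋂_k C(σ|k)`. -/
def suslinOp {Y : Type u} (C : List ℕ → Set Y) : Set Y :=
  ⋃ σ : ℕ → ℕ, ⋂ k : ℕ, C (seqPrefix σ k)

/-- The Suslin-F subsets of `Y`: results of the Suslin operation applied to schemes of
closed sets. -/
def SuslinF (Y : Type u) [TopologicalSpace Y] : Set (Set Y) :=
  { S | ∃ C : List ℕ → Set Y, (∀ s, IsClosed (C s)) ∧ S = suslinOp C }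

/-- The classes `F_a(Y)` for `a ≤ ω₁`, where `F_{ω₁}(Y)` is the class of Suslin-F sets. -/
def FClass (Y : Type u) [TopologicalSpace Y] (a : Ordinal.{0}) : Set (Set Y) :=
  if a < omega1 then FBorel Y a else SuslinF Y

/-- `ComplIn Y X` is the complexity of `X` in `Y`: the least `a ≤ ω₁` with `X ∈ F_a(Y)`. -/
def ComplIn (Y : Type u) [TopologicalSpace Y] (X : Set Y) : Ordinal.{0} :=
  sInf { a : Ordinal.{0} | a ≤ omega1 ∧ X ∈ FClass Y a }

/-! ### Compactifications, K-analytic spaces, local complexity -/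

/-- `(K, e)` is a compactification of `X`: `K` is compact Hausdorff and `e` is a dense
embedding of `X` into `K`. -/
def IsCompactification (X : Type u) [TopologicalSpace X] (K : Type u) [TopologicalSpace K]
    (e : X → K) : Prop :=
  CompactSpace K ∧ T2Space K ∧ IsEmbedding e ∧ DenseRange e

/-- The set `Compl(X)` of all complexities attained by `X` in its compactifications. -/
def AttainedCompl (X : Type u) [TopologicalSpace X] : Set Ordinal.{0} :=
  { γ | ∃ (K : Type u) (_ : TopologicalSpace K) (e : X → K),
      IsCompactification X K e ∧ Set.range e ∈ SuslinF K ∧ γ = ComplIn K (Set.range e) }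

/-- A topological space is K-analytic iff it embeds as a Suslin-F subset of some compact
Hausdorff space. -/
def IsKAnalytic (X : Type u) [TopologicalSpace X] : Prop :=
  ∃ (K : Type u) (_ : TopologicalSpace K) (e : X → K),
    CompactSpace K ∧ T2Space K ∧ IsEmbedding e ∧ Set.range e ∈ SuslinF K

/-- The local complexity `Compl_y(X, Y)`: the least complexity of `cl(U) ∩ X` in `Y` over
all open neighborhoods `U` of `y` in `Y`. -/
def locComplAt (Y : Type u) [TopologicalSpace Y] (X : Set Y) (y : Y) : Ordinal.{0} :=
  sInf { γ : Ordinal.{0} | ∃ U : Set Y, IsOpen U ∧ y ∈ U ∧ γ = ComplIn Y (closure U ∩ X) }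

/-- The local complexity `Compl_loc(X, Y) = sup_{x ∈ X} Compl_x(X, Y)`. -/
def locCompl (Y : Type u) [TopologicalSpace Y] (X : Set Y) : Ordinal.{0} :=
  ⨆ x : X, locComplAt Y X (x : Y)

/-- The local complexity `Compl_locbar(X, Y) = sup_{y ∈ Y} Compl_y(X, Y)`. -/
def locComplBar (Y : Type u) [TopologicalSpace Y] (X : Set Y) : Ordinal.{0} :=
  ⨆ y : Y, locComplAt Y X y

/-! ### Trees on ω -/

/-- A tree on `ω`: a set of finite sequences closed under initial segments. -/
def IsTree (T : Set (List ℕ)) : Prop := ∀ ⦃s t : List ℕ⦄, s <+: t → t ∈ T → s ∈ T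

/-- A tree is well-founded iff it carries no infinite branch. -/
def WellFoundedTree (T : Set (List ℕ)) : Prop := ¬ ∃ σ : ℕ → ℕ, ∀ k : ℕ, seqPrefix σ k ∈ T

/-- `t` is a leaf of `T`: it belongs to `T` and has no immediate successor in `T`. -/
def IsLeafOf (T : Set (List ℕ)) (t : List ℕ) : Prop := t ∈ T ∧ ∀ n : ℕ, t ++ [n] ∉ T

/-- The tree `T^t = {s | t⌢s ∈ T}` corresponding to `t` in `T`. -/
def subtreeAt (T : Set (List ℕ)) (t : List ℕ) : Set (List ℕ) := { s | t ++ s ∈ T }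

/-- The smallest tree containing a set `S` of finite sequences. -/
def clTr (S : Set (List ℕ)) : Set (List ℕ) := { u | ∃ s ∈ S, u <+: s }

/-- The leaf derivative: keep the elements having some proper extension in `T`. -/
def leafDeriv (T : Set (List ℕ)) : Set (List ℕ) := { t ∈ T | ∃ s ∈ T, t <+: s ∧ t ≠ s }

/-- The derivative `D_iie`: keep the `t ∈ T` admitting infinitely many pairwise
incomparable extensions in `T` of pairwise different lengths. -/
def Diie (T : Set (List ℕ)) : Set (List ℕ) :=
  { t ∈ T | ∃ g : ℕ → List ℕ, (∀ n, g n ∈ T ∧ t <+: g n) ∧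
      ∀ ⦃m n : ℕ⦄, m < n →
        (¬ g m <+: g n) ∧ (¬ g n <+: g m) ∧ (g m).length ≠ (g n).length }

/-- Transfinitely iterated derivative, starting from `cl_Tr S` and taking intersections
at limit stages. -/
def iterDeriv (D : Set (List ℕ) → Set (List ℕ)) (S : Set (List ℕ)) (γ : Ordinal.{0}) :
    Set (List ℕ) :=
  Ordinal.limitRecOn γ (clTr S) (fun _ ih => D ih)
    (fun a _ ih => ⋂ b : Ordinal.{0}, ⋂ h : b < a, ih b h)

/-- The rank associated with the leaf derivative: the least `γ` such that the `(γ+1)`-st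
iterated leaf derivative is empty, and `ω₁` if there is no such countable ordinal. -/
def leafRank (T : Set (List ℕ)) : Ordinal.{0} :=
  if ∃ γ : Ordinal.{0}, γ < omega1 ∧ iterDeriv leafDeriv T (γ + 1) = ∅ then
    sInf { γ : Ordinal.{0} | iterDeriv leafDeriv T (γ + 1) = ∅ }
  else omega1

/-- `E` is the canonical extension of the `l(T)`-scheme `H` to the whole of `T`:
it agrees with `H` on the leaves of `T`, and at a non-leaf `t ∈ T` it is the union
(resp. the intersection) of its values at the immediate successors of `t` in `T` when
the leaf-rank of `T^t` is odd (resp. even). -/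
def IsSchemeExtension (Y : Type u) [TopologicalSpace Y] (T : Set (List ℕ))
    (H E : List ℕ → Set Y) : Prop :=
  (∀ t, IsLeafOf T t → E t = H t) ∧
  (∀ t ∈ T, ¬ IsLeafOf T t → OddOrd (leafRank (subtreeAt T t)) →
      E t = ⋃ n ∈ { n : ℕ | t ++ [n] ∈ T }, E (t ++ [n])) ∧
  (∀ t ∈ T, ¬ IsLeafOf T t → EvenOrd (leafRank (subtreeAt T t)) →
      E t = ⋂ n ∈ { n : ℕ | t ++ [n] ∈ T }, E (t ++ [n]))

/-- `H` (an `l(T)`-scheme of subsets of `X`) is a *universal simple `F_α`-representation*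
of `X`: `r_l(T) ≤ α`, and for every space `Y` containing (a copy of) `X`, the extension
of the scheme of closures `(cl_Y (H t))_t` computes `X` at the root. -/
def HasUniversalSimpleRep (X : Type u) [TopologicalSpace X] (α : Ordinal.{0}) : Prop :=
  ∃ (T : Set (List ℕ)) (H : List ℕ → Set X), IsTree T ∧ WellFoundedTree T ∧ [] ∈ T ∧
    leafRank T ≤ α ∧
    ∀ (Y : Type u) (_ : TopologicalSpace Y) (e : X → Y), IsEmbedding e →
      ∃ E : List ℕ → Set Y,
        IsSchemeExtension Y T (fun t => closure (e '' H t)) E ∧ E [] = Set.range e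

/-! ### Canonical trees -/

/-- Auxiliary indices for the canonical trees: at a successor `a = b + 1` every index is
`b`, and at a countable limit the indices enumerate all ordinals `< a` injectively. -/
def canonIdx (a : Ordinal.{0}) (n : ℕ) : Ordinal.{0} :=
  if hs : ∃ b, a = b + 1 then hs.choose
  else if hf : ∃ f : ℕ → Ordinal.{0}, Function.Injective f ∧ Set.range f = Set.Iio a then
    hf.choose n
  else 0

theorem canonIdx_lt {a : Ordinal.{0}} (h0 : a ≠ 0) (n : ℕ) : canonIdx a n < a := by
  unfold canonIdx
  split
  · next hs =>
      conv_rhs => rw [hs.choose_spec]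
      rw [Ordinal.add_one_eq_succ]
      exact Order.lt_succ _
  · split
    · next hf =>
        have hmem : hf.choose n ∈ Set.range hf.choose := Set.mem_range_self n
        rw [hf.choose_spec.2] at hmem
        exact hmem
    · first
        | exact pos_iff_ne_zero.mpr h0
        | exact lt_of_le_of_ne (zero_le _) (Ne.symm h0)
        | exact Ordinal.pos_of_ne_zero h0

/-- The canonical "maximal" trees `T_α` of leaf-rank `α < ω₁` (with `T_α = ω^{<ω}` for
`α ≥ ω₁`): `T_0 = {∅}`, `T_{α+1} = {∅} ∪ ⋃_n n⌢T_α`, and at countable limits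
`T_α = {∅} ∪ ⋃_n n⌢T_{π_α(n)}` for an injective enumeration `π_α` of `α`. -/
def canonTree : Ordinal.{0} → Set (List ℕ) :=
  WellFounded.fix Ordinal.lt_wf (C := fun _ => Set (List ℕ)) fun a ih =>
    if h0 : a = 0 then {([] : List ℕ)}
    else if omega1 ≤ a then Set.univ
    else {([] : List ℕ)} ∪ ⋃ n : ℕ, (List.cons n) '' ih (canonIdx a n) (canonIdx_lt h0 n)

/-- The canonical trees `T^c_α`: `T_{α'}` for even `α`, and `{∅} ∪ 1⌢T_{α'}` for odd `α`. -/
def canonTreeC (a : Ordinal.{0}) : Set (List ℕ) :=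
  if EvenOrd a then canonTree (ordPrime a)
  else {([] : List ℕ)} ∪ (List.cons 1) '' canonTree (ordPrime a)

/-- The canonical trees `T^c_{α,i} = {∅} ∪ i⌢T_{α'}` (for odd `α`). -/
def canonTreeCi (a : Ordinal.{0}) (i : ℕ) : Set (List ℕ) :=
  {([] : List ℕ)} ∪ (List.cons i) '' canonTree (ordPrime a)

/-! ### Admissible maps, `R_T` and regular representations -/

/-- An admissible map on a tree `T`: monotone w.r.t. extension, with
`|φ(t)| = t(0) + ⋯ + t(|t|-1)` for all `t ∈ T`. -/
def Admissible (T : Set (List ℕ)) (φ : List ℕ → List ℕ) : Prop :=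
  (∀ ⦃s t : List ℕ⦄, s ∈ T → t ∈ T → s <+: t → φ s <+: φ t) ∧
  (∀ t ∈ T, (φ t).length = t.sum)

/-- `R_T(C)`: the points of `C(∅)` admitting an admissible witness map along `T`. -/
def RT {Y : Type u} (T : Set (List ℕ)) (C : List ℕ → Set Y) : Set Y :=
  { x | x ∈ C [] ∧ ∃ φ : List ℕ → List ℕ, Admissible T φ ∧ ∀ t ∈ T, x ∈ C (φ t) }

/-- `R_α(C) = R_{T^c_α}(C)`. -/
def Ralpha {Y : Type u} (a : Ordinal.{0}) (C : List ℕ → Set Y) : Set Y :=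
  RT (canonTreeC a) C

/-- A Suslin scheme `C` of subsets of `X ⊆ Y` is *complete on `X`*: it is a Suslin scheme
on `X` (it consists of subsets of `X` and the Suslin operation applied to it covers `X`)
such that every nontrivial filter containing, for each `n`, a set `C s` with `|s| = n`,
has an accumulation point in `X`. -/
def IsCompleteOn (Y : Type u) [TopologicalSpace Y] (X : Set Y) (C : List ℕ → Set Y) :
    Prop :=
  IsSuslinScheme C ∧ (∀ s, C s ⊆ X) ∧ X ⊆ suslinOp C ∧
  ∀ F : Filter Y, F.NeBot → (∀ n : ℕ, ∃ s : List ℕ, s.length = n ∧ C s ∈ F) →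
    ∃ x ∈ X, ClusterPt x F

/-- The tree `S_C(y)` of finite sequences `s` with `y ∈ cl_Y (C s)`. -/
def SCtree (Y : Type u) [TopologicalSpace Y] (C : List ℕ → Set Y) (y : Y) :
    Set (List ℕ) :=
  { s : List ℕ | y ∈ closure (C s) }

/-! ### Zoom spaces -/

/-- The set of isolated points of a topological space. -/
def IsolPts (Y : Type u) [TopologicalSpace Y] : Set Y := { y | IsOpen ({y} : Set Y) }

/-- The underlying set of the zoom space `Z(Y, X)`: the non-isolated points of `Y`
together with the disjoint union of the spaces `X i`, `i ∈ I_Y`. -/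
def ZoomCarrier (Y : Type u) [TopologicalSpace Y] (X : IsolPts Y → Type v) :
    Type (max u v) :=
  ({ y : Y // y ∉ IsolPts Y }) ⊕ ((i : IsolPts Y) × X i)

/-- The basic set `V_U ⊆ Z(Y, X)` associated with `U ⊆ Y`:
`V_U = (U ∖ I_Y) ∪ ⋃ {X i | i ∈ U ∩ I_Y}`. -/
def zoomVSet (Y : Type u) [TopologicalSpace Y] (X : IsolPts Y → Type v) (U : Set Y) :
    Set (ZoomCarrier Y X) :=
  { z | Sum.elim (fun y : { y : Y // y ∉ IsolPts Y } => (y : Y) ∈ U)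
      (fun p : (i : IsolPts Y) × X i => (p.1 : Y) ∈ U) z }

/-- The topology of the zoom space `Z(Y, X)`, generated by the open subsets of the
spaces `X i` together with the sets `V_U` for `U` open in `Y`. -/
instance zoomTopology (Y : Type u) [TopologicalSpace Y] (X : IsolPts Y → Type v)
    [∀ i, TopologicalSpace (X i)] : TopologicalSpace (ZoomCarrier Y X) :=
  TopologicalSpace.generateFrom
    ({ B | ∃ (i : IsolPts Y) (W : Set (X i)), IsOpen W ∧
        B = Sum.inr '' ((Sigma.mk i) '' W) } ∪
     { B | ∃ U : Set Y, IsOpen U ∧ B = zoomVSet Y X U })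

/-- The subset of `Z(Y, X)` which is the underlying set of the zoom space `Z(Ys, A)` of
a subspace `Ys ⊆ Y` with respect to subspaces `A i ⊆ X i`
(here the isolated points of `Ys` are identified with those of `Y`). -/
def zoomSub (Y : Type u) [TopologicalSpace Y] (X : IsolPts Y → Type v) (Ys : Set Y)
    (A : ∀ i : IsolPts Y, Set (X i)) : Set (ZoomCarrier Y X) :=
  { z | Sum.elim (fun y : { y : Y // y ∉ IsolPts Y } => (y : Y) ∈ Ys)
      (fun p : (i : IsolPts Y) × X i => p.2 ∈ A p.1) z }

/-! ### Broom sets and broom spaces -/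

/-- A forking sequence: a sequence of nonempty finite sequences with pairwise distinct
first entries. -/
def IsForking (f : ℕ → List ℕ) : Prop :=
  (∀ n, f n ≠ []) ∧ ∀ ⦃m n : ℕ⦄, m ≠ n → (f m).head? ≠ (f n).head?

/-- The hierarchy of finite broom sets: `B ∈ B_α` iff `IsBroomB α B`.
`B_0 = {{∅}}`; for odd `α`, `B_α = B_{<α} ∪ {h⌢B | B ∈ B_{α-1}, h ∈ ω^{<ω}}`; for even
`α > 0`, `B_α = B_{<α} ∪ {⋃_n f_n⌢B_n | B_n ∈ B_{<α}, (f_n) a forking sequence}`. -/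
inductive IsBroomB : Ordinal.{0} → Set (List ℕ) → Prop
  | base : IsBroomB 0 {[]}
  | mono {β α : Ordinal.{0}} {B : Set (List ℕ)} : β < α → IsBroomB β B → IsBroomB α B
  | odd {β : Ordinal.{0}} {B : Set (List ℕ)} (h : List ℕ) : EvenOrd β → IsBroomB β B →
      IsBroomB (β + 1) ((fun s => h ++ s) '' B)
  | even {α : Ordinal.{0}} {f : ℕ → List ℕ} {Bs : ℕ → Set (List ℕ)}
      (g : ℕ → Ordinal.{0}) :
      0 < α → EvenOrd α → IsForking f →
      (∀ n : ℕ, g n < α) → (∀ n : ℕ, IsBroomB (g n) (Bs n)) →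
      IsBroomB α (⋃ n : ℕ, (fun s => f n ++ s) '' Bs n)

/-- The infinite sequence `s⌢ν` obtained by extending the finite sequence `s` by `ν`. -/
def seqAppend (s : List ℕ) (ν : ℕ → ℕ) : ℕ → ℕ :=
  fun k => if h : k < s.length then s.get ⟨k, h⟩ else ν (k - s.length)

/-- `A` is a broom-extension of `B`:
`A = {s⌢f^s_n⌢ν^s_n | s ∈ B, n ∈ ω}` for forking sequences `(f^s_n)_n, s ∈ B`, and
points `ν^s_n ∈ ω^ω`. -/
def IsBroomExtension (B : Set (List ℕ)) (A : Set (ℕ → ℕ)) : Prop :=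
  ∃ (f : List ℕ → ℕ → List ℕ) (ν : List ℕ → ℕ → (ℕ → ℕ)),
    (∀ s ∈ B, IsForking (f s)) ∧
    A = { σ : ℕ → ℕ | ∃ s ∈ B, ∃ n : ℕ, σ = seqAppend (s ++ f s n) (ν s n) }

/-- The hierarchy of infinite broom sets: `A ∈ A_α` iff `A` is a broom-extension of some
`B ∈ B_α`. -/
def IsBroomA (α : Ordinal.{0}) (A : Set (ℕ → ℕ)) : Prop :=
  ∃ B : Set (List ℕ), IsBroomB α B ∧ IsBroomExtension B A

/-- `u` is a finite initial segment of the infinite sequence `σ`. -/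
def InfExtends (u : List ℕ) (σ : ℕ → ℕ) : Prop := seqPrefix σ u.length = u

/-- The tree of all finite initial segments of members of a set of infinite sequences. -/
def clTrInf (S : Set (ℕ → ℕ)) : Set (List ℕ) := { u | ∃ σ ∈ S, InfExtends u σ }

/-- The broom space `T_𝒜` on `ω^ω ∪ {∞}` (with `∞ = none`): every point of `ω^ω` is
isolated, and the neighborhood subbasis at `∞` consists of the complements of single
points of `ω^ω` and of the complements of the sets `A ∈ 𝒜`. -/
def broomTop (𝒜 : Set (Set (ℕ → ℕ))) : TopologicalSpace (Option (ℕ → ℕ)) :=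
  TopologicalSpace.generateFrom
    ({ S | ∃ σ : ℕ → ℕ, S = {Option.some σ} } ∪
     { S | ∃ σ : ℕ → ℕ, S = insert Option.none (Option.some '' ({σ}ᶜ)) } ∪
     { S | ∃ A ∈ 𝒜, S = insert Option.none (Option.some '' Aᶜ) })

/-! The derivative `D_iie` and the closure `cl_Tr` both commute with pulling back along
`t ↦ h⌢t`. Hence the iterated derivatives of `h⌢B` are, apart from the finitely many prefixes
of `h`, the shifts of those of `B`; and a nonempty node of a forking union `⋃ₙ fₙ⌢Bₙ` lies in a
single branch `fₙ⌢Bₙ`, so the iterated derivatives of the union are those of the branches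
together with possibly `∅`. Since `D_iie` kills finite sets and `β < α` with `α` even forces
`β' < α'`, induction along the broom hierarchy gives (1). For (2), a node of `D_iie(A)` is an
initial segment of infinitely many points of `A`, while a node outside `cl_Tr(B)` passes
through some proper prefix `s ∈ B`, and the forking condition at `s` leaves at most one point
of `A` for each such `s`; so `D_iie(A) ⊆ cl_Tr(B)`. -/

theorem exists_eq_omega0_mul_add_natCast (a : Ordinal.{0}) :
    ∃ (q : Ordinal.{0}) (n : ℕ), a = ω * q + n := by
  obtain ⟨n, hn⟩ := Ordinal.lt_omega0.mp (Ordinal.mod_lt a Ordinal.omega0_ne_zero)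
  exact ⟨a / ω, n, by rw [← hn, Ordinal.div_add_mod]⟩

theorem omega0_mul_add_natCast_div_omega0 (q : Ordinal.{0}) (n : ℕ) : (ω * q + n) / ω = q := by
  rw [Ordinal.mul_add_div _ Ordinal.omega0_ne_zero,
    Ordinal.div_eq_zero_of_lt (Ordinal.natCast_lt_omega0 n), add_zero]

theorem le_of_omega0_mul_add_natCast_le {q p : Ordinal.{0}} {n m : ℕ}
    (h : ω * q + n ≤ ω * p + m) : q ≤ p := by
  simpa only [omega0_mul_add_natCast_div_omega0] using Ordinal.div_le_left h ω

theorem omega0_mul_add_natCast_lt {q p : Ordinal.{0}} (h : q < p) (n : ℕ) : ω * q + n < ω * p :=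
  calc ω * q + n < ω * q + ω := add_lt_add_right (Ordinal.natCast_lt_omega0 n) _
    _ = ω * (q + 1) := (mul_add_one _ _).symm
    _ ≤ ω * p := mul_le_mul_right (Order.add_one_le_of_lt h) _

theorem omega0_mul_add_natCast_add_one (q : Ordinal.{0}) (n : ℕ) :
    ω * q + n + 1 = ω * q + (n + 1 : ℕ) := by
  rw [Nat.cast_succ, add_assoc]

theorem ordPrime_omega0_mul_add_natCast (q : Ordinal.{0}) (n : ℕ) :
    ordPrime (ω * q + n) = ω * q + (n / 2 : ℕ) := by
  rw [ordPrime, omega0_mul_add_natCast_div_omega0, Ordinal.mul_add_mod_self,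
    Ordinal.natCast_mod_omega0, Ordinal.natCast_div, Nat.cast_ofNat]

theorem evenOrd_omega0_mul_add_natCast_iff (q : Ordinal.{0}) (n : ℕ) :
    EvenOrd (ω * q + n) ↔ Even n := by
  have h2ω : ω * q = 2 * (ω * q) := by
    rw [← mul_assoc, ← Nat.cast_ofNat, Ordinal.natCast_mul_omega0 two_pos]
  rw [EvenOrd, h2ω, Ordinal.mul_add_mod_self, ← Nat.cast_ofNat, ← Ordinal.natCast_mod,
    Nat.cast_eq_zero, Nat.even_iff]

theorem ordPrime_zero : ordPrime 0 = 0 := by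
  simpa using ordPrime_omega0_mul_add_natCast 0 0

theorem ordPrime_mono : Monotone ordPrime := by
  intro a b hab
  obtain ⟨q, n, rfl⟩ := exists_eq_omega0_mul_add_natCast a
  obtain ⟨p, m, rfl⟩ := exists_eq_omega0_mul_add_natCast b
  rw [ordPrime_omega0_mul_add_natCast, ordPrime_omega0_mul_add_natCast]
  rcases (le_of_omega0_mul_add_natCast_le hab).lt_or_eq with hqp | rfl
  · exact (omega0_mul_add_natCast_lt hqp _).le.trans le_self_add
  · have hnm : n ≤ m := by exact_mod_cast (add_le_add_iff_left _).mp hab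
    gcongr

theorem ordPrime_lt_ordPrime_of_evenOrd {a b : Ordinal.{0}} (hab : a < b) (hb : EvenOrd b) :
    ordPrime a < ordPrime b := by
  obtain ⟨q, n, rfl⟩ := exists_eq_omega0_mul_add_natCast a
  obtain ⟨p, m, rfl⟩ := exists_eq_omega0_mul_add_natCast b
  rw [evenOrd_omega0_mul_add_natCast_iff] at hb
  rw [ordPrime_omega0_mul_add_natCast, ordPrime_omega0_mul_add_natCast]
  rcases (le_of_omega0_mul_add_natCast_le hab.le).lt_or_eq with hqp | rfl
  · exact (omega0_mul_add_natCast_lt hqp _).trans_le le_self_add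
  · have hnm : n < m := by exact_mod_cast (add_lt_add_iff_left _).mp hab
    gcongr
    obtain ⟨k, rfl⟩ := hb
    omega

theorem ordPrime_add_one_of_evenOrd {b : Ordinal.{0}} (hb : EvenOrd b) :
    ordPrime (b + 1) = ordPrime b := by
  obtain ⟨q, n, rfl⟩ := exists_eq_omega0_mul_add_natCast b
  rw [evenOrd_omega0_mul_add_natCast_iff] at hb
  rw [omega0_mul_add_natCast_add_one, ordPrime_omega0_mul_add_natCast,
    ordPrime_omega0_mul_add_natCast]
  obtain ⟨k, rfl⟩ := hb
  congr 2
  omega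

theorem not_evenOrd_add_one_of_evenOrd {b : Ordinal.{0}} (hb : EvenOrd b) :
    ¬ EvenOrd (b + 1) := by
  obtain ⟨q, n, rfl⟩ := exists_eq_omega0_mul_add_natCast b
  rw [evenOrd_omega0_mul_add_natCast_iff] at hb
  rw [omega0_mul_add_natCast_add_one, evenOrd_omega0_mul_add_natCast_iff, Nat.even_add_one]
  exact not_not_intro hb

theorem clTr_subset_of_subset_clTr {S S' : Set (List ℕ)} (h : S ⊆ clTr S') :
    clTr S ⊆ clTr S' := by
  rintro u ⟨s, hs, hus⟩
  obtain ⟨w, hw, hsw⟩ := h hs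
  exact ⟨w, hw, hus.trans hsw⟩

theorem iterDeriv_zero (D : Set (List ℕ) → Set (List ℕ)) (S : Set (List ℕ)) :
    iterDeriv D S 0 = clTr S := by
  rw [iterDeriv, Ordinal.limitRecOn_zero]

theorem iterDeriv_add_one (D : Set (List ℕ) → Set (List ℕ)) (S : Set (List ℕ))
    (γ : Ordinal.{0}) : iterDeriv D S (γ + 1) = D (iterDeriv D S γ) := by
  unfold iterDeriv
  rw [Ordinal.limitRecOn_add_one]

theorem iterDeriv_limit (D : Set (List ℕ) → Set (List ℕ)) (S : Set (List ℕ))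
    {γ : Ordinal.{0}} (hγ : Order.IsSuccLimit γ) :
    iterDeriv D S γ = ⋂ b, ⋂ _ : b < γ, iterDeriv D S b := by
  unfold iterDeriv
  rw [Ordinal.limitRecOn_limit _ _ _ _ hγ]

theorem iterDeriv_antitone {D : Set (List ℕ) → Set (List ℕ)} (hD : ∀ T, D T ⊆ T)
    (S : Set (List ℕ)) : Antitone (iterDeriv D S) := by
  refine antitone_iff_forall_lt.mpr fun γ δ hγδ => ?_
  induction δ using Ordinal.limitRecOn with
  | zero => exact absurd zero_le hγδ.not_ge
  | add_one δ ih =>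
    rw [iterDeriv_add_one]
    rcases (Order.lt_add_one_iff.mp hγδ).lt_or_eq with hγδ | rfl
    · exact (hD _).trans (ih hγδ)
    · exact hD _
  | limit δ hδ _ =>
    rw [iterDeriv_limit D S hδ]
    exact Set.biInter_subset_of_mem hγδ

theorem iterDeriv_mono_of_subset_clTr {D : Set (List ℕ) → Set (List ℕ)} (hD : Monotone D)
    {S S' : Set (List ℕ)} (h : S ⊆ clTr S') (γ : Ordinal.{0}) :
    iterDeriv D S γ ⊆ iterDeriv D S' γ := by
  induction γ using Ordinal.limitRecOn with
  | zero =>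
    rw [iterDeriv_zero, iterDeriv_zero]
    exact clTr_subset_of_subset_clTr h
  | add_one δ ih =>
    rw [iterDeriv_add_one, iterDeriv_add_one]
    exact hD ih
  | limit δ hδ ih =>
    rw [iterDeriv_limit _ _ hδ, iterDeriv_limit _ _ hδ]
    exact Set.iInter₂_mono ih

theorem preimage_iterDeriv {D : Set (List ℕ) → Set (List ℕ)} (p : List ℕ → List ℕ)
    (hcl : ∀ S, p ⁻¹' clTr S = clTr (p ⁻¹' S))
    (hD : ∀ T, p ⁻¹' D T = D (p ⁻¹' T)) (S : Set (List ℕ)) (γ : Ordinal.{0}) :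
    p ⁻¹' iterDeriv D S γ = iterDeriv D (p ⁻¹' S) γ := by
  induction γ using Ordinal.limitRecOn with
  | zero => rw [iterDeriv_zero, iterDeriv_zero, hcl]
  | add_one δ ih => rw [iterDeriv_add_one, iterDeriv_add_one, hD, ih]
  | limit δ hδ ih =>
    rw [iterDeriv_limit _ _ hδ, iterDeriv_limit _ _ hδ, Set.preimage_iInter₂]
    exact Set.iInter₂_congr ih

theorem preimage_append_clTr (h : List ℕ) (S : Set (List ℕ)) :
    (h ++ ·) ⁻¹' clTr S = clTr ((h ++ ·) ⁻¹' S) := by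
  ext u
  constructor
  · rintro ⟨s, hs, r, rfl⟩
    exact ⟨u ++ r, by simpa using hs, List.prefix_append u r⟩
  · rintro ⟨w, hw, hu⟩
    exact ⟨h ++ w, hw, (List.prefix_append_right_inj h).mpr hu⟩

theorem diie_subset (T : Set (List ℕ)) : Diie T ⊆ T := fun _ ht => ht.1

theorem diie_mono : Monotone Diie := by
  rintro S T hST t ⟨ht, g, hg, hinc⟩
  exact ⟨hST ht, g, fun n => ⟨hST (hg n).1, (hg n).2⟩, hinc⟩

theorem diie_eq_empty_of_finite {T : Set (List ℕ)} (hT : T.Finite) : Diie T = ∅ := by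
  refine Set.eq_empty_of_forall_notMem fun t ⟨_, g, hg, hinc⟩ => ?_
  have hg_inj : Function.Injective g := by
    intro m n hmn
    by_contra hne
    rcases Nat.lt_or_gt_of_ne hne with hlt | hlt
    · exact (hinc hlt).2.2 (congrArg List.length hmn)
    · exact (hinc hlt).2.2 (congrArg List.length hmn.symm)
  exact Set.infinite_of_injective_forall_mem hg_inj (fun n => (hg n).1) hT

theorem preimage_append_diie (h : List ℕ) (T : Set (List ℕ)) :
    (h ++ ·) ⁻¹' Diie T = Diie ((h ++ ·) ⁻¹' T) := by
  ext t
  constructor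
  · rintro ⟨ht, g, hg, hinc⟩
    have hg' : ∀ n, ∃ r, g n = h ++ t ++ r := fun n => by
      obtain ⟨r, hr⟩ := (hg n).2
      exact ⟨r, hr.symm⟩
    choose r hr using hg'
    refine ⟨ht, fun n => t ++ r n, fun n => ⟨?_, List.prefix_append t (r n)⟩, ?_⟩
    · simpa [← List.append_assoc, ← hr] using (hg n).1
    · intro m n hmn
      simp only [hr, List.append_assoc, List.prefix_append_right_inj, List.length_append,
        ne_eq, Nat.add_left_cancel_iff] at hinc ⊢
      exact hinc hmn
  · rintro ⟨ht, g, hg, hinc⟩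
    refine ⟨ht, fun n => h ++ g n, fun n => ⟨(hg n).1, ?_⟩, ?_⟩
    · exact (List.prefix_append_right_inj h).mpr (hg n).2
    · intro m n hmn
      simp only [List.prefix_append_right_inj, List.length_append, ne_eq,
        Nat.add_left_cancel_iff]
      exact hinc hmn

theorem preimage_append_iterDeriv_diie (h : List ℕ) (S : Set (List ℕ)) (γ : Ordinal.{0}) :
    (h ++ ·) ⁻¹' iterDeriv Diie S γ = iterDeriv Diie ((h ++ ·) ⁻¹' S) γ :=
  preimage_iterDeriv _ (preimage_append_clTr h) (preimage_append_diie h) S γ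

theorem mem_clTr_of_mem_iterDeriv_diie {S : Set (List ℕ)} {γ : Ordinal.{0}} {t : List ℕ}
    (ht : t ∈ iterDeriv Diie S γ) : t ∈ clTr S := by
  simpa only [iterDeriv_zero] using iterDeriv_antitone diie_subset S zero_le ht

theorem prefix_or_eq_append_of_prefix_append {α : Type*} {t h s : List α} (ht : t <+: h ++ s) :
    t <+: h ∨ ∃ v, t = h ++ v :=
  (List.prefix_or_prefix_of_prefix ht (List.prefix_append h s)).imp id
    fun ⟨v, hv⟩ => ⟨v, hv.symm⟩

theorem head?_eq_of_prefix_append {α : Type*} {t h s : List α} (ht : t <+: h ++ s)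
    (ht0 : t ≠ []) (h0 : h ≠ []) : t.head? = h.head? := by
  obtain ⟨r, hr⟩ := ht
  rw [← List.head?_append_of_ne_nil t (l₂ := r) ht0, hr, List.head?_append_of_ne_nil h h0]

theorem iterDeriv_diie_image_append_subset (h : List ℕ) (B : Set (List ℕ)) (γ : Ordinal.{0}) :
    iterDeriv Diie ((h ++ ·) '' B) γ ⊆ {u | u <+: h} ∪ (h ++ ·) '' iterDeriv Diie B γ := by
  intro t ht
  obtain ⟨_, ⟨s, _, rfl⟩, hts⟩ := mem_clTr_of_mem_iterDeriv_diie ht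
  refine (prefix_or_eq_append_of_prefix_append hts).imp id fun ⟨v, hv⟩ => ⟨v, ?_, hv.symm⟩
  have hv' : v ∈ (h ++ ·) ⁻¹' iterDeriv Diie ((h ++ ·) '' B) γ :=
    Set.mem_preimage.mpr (hv ▸ ht)
  rwa [preimage_append_iterDeriv_diie, Set.preimage_image_eq _ (List.append_right_injective h)]
    at hv'

theorem finite_iterDeriv_diie_image_append (h : List ℕ) {B : Set (List ℕ)} {γ : Ordinal.{0}}
    (hB : (iterDeriv Diie B γ).Finite) : (iterDeriv Diie ((h ++ ·) '' B) γ).Finite :=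
  ((h.inits.finite_toSet.subset fun u hu => (List.mem_inits u h).mpr hu).union
    (hB.image _)).subset (iterDeriv_diie_image_append_subset h B γ)

theorem IsForking.preimage_singleton_append_iUnion {f : ℕ → List ℕ} (hf : IsForking f)
    (Bs : ℕ → Set (List ℕ)) {k c : ℕ} (hk : (f k).head? = some c) :
    ([c] ++ ·) ⁻¹' ⋃ j, (f j ++ ·) '' Bs j = ([c] ++ ·) ⁻¹' ((f k ++ ·) '' Bs k) := by
  ext u
  simp only [Set.mem_preimage, Set.mem_iUnion]
  refine ⟨fun ⟨j, s, hs, hjs⟩ => ?_, fun hu => ⟨k, hu⟩⟩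
  obtain rfl : j = k := by
    have hjs' : f j ++ s = c :: u := hjs
    by_contra hjk
    refine hf.2 hjk ?_
    rw [hk, ← List.head?_append_of_ne_nil (f j) (hf.1 j) (l₂ := s), hjs']
    rfl
  exact ⟨s, hs, hjs⟩

theorem IsForking.iterDeriv_diie_iUnion_subset {f : ℕ → List ℕ} (hf : IsForking f)
    (Bs : ℕ → Set (List ℕ)) (γ : Ordinal.{0}) :
    iterDeriv Diie (⋃ k, (f k ++ ·) '' Bs k) γ ⊆
      insert [] (⋃ k, iterDeriv Diie ((f k ++ ·) '' Bs k) γ) := by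
  rintro (_ | ⟨c, u⟩) ht
  · exact Set.mem_insert _ _
  obtain ⟨_, hw, hcw⟩ := mem_clTr_of_mem_iterDeriv_diie ht
  obtain ⟨k, s, -, rfl⟩ := Set.mem_iUnion.mp hw
  have hk : (f k).head? = some c :=
    (head?_eq_of_prefix_append hcw (List.cons_ne_nil c u) (hf.1 k)).symm
  have hu : u ∈ ([c] ++ ·) ⁻¹' iterDeriv Diie (⋃ k, (f k ++ ·) '' Bs k) γ := ht
  rw [preimage_append_iterDeriv_diie, hf.preimage_singleton_append_iUnion Bs hk,
    ← preimage_append_iterDeriv_diie] at hu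
  exact Set.mem_insert_of_mem _ (Set.mem_iUnion.mpr ⟨k, hu⟩)

theorem iterDeriv_diie_eq_empty_of_finite_of_lt {S : Set (List ℕ)} {γ δ : Ordinal.{0}}
    (hfin : (iterDeriv Diie S γ).Finite) (hγδ : γ < δ) : iterDeriv Diie S δ = ∅ :=
  Set.subset_empty_iff.mp <| by
    simpa only [iterDeriv_add_one, diie_eq_empty_of_finite hfin] using
      iterDeriv_antitone diie_subset S (Order.add_one_le_of_lt hγδ)

theorem IsBroomB.iterDeriv_diie_ordPrime {α : Ordinal.{0}} {B : Set (List ℕ)}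
    (hB : IsBroomB α B) :
    (iterDeriv Diie B (ordPrime α)).Finite ∧
      (EvenOrd α → iterDeriv Diie B (ordPrime α) ⊆ {[]}) := by
  induction hB with
  | base =>
    have hroot : iterDeriv Diie {[]} (ordPrime 0) ⊆ {[]} := by
      rw [ordPrime_zero, iterDeriv_zero]
      rintro u ⟨_, rfl, hu⟩
      exact List.prefix_nil.mp hu
    exact ⟨(Set.finite_singleton _).subset hroot, fun _ => hroot⟩
  | mono hβα _ ih =>
    refine ⟨ih.1.subset (iterDeriv_antitone diie_subset _ (ordPrime_mono hβα.le)), fun hα => ?_⟩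
    rw [iterDeriv_diie_eq_empty_of_finite_of_lt ih.1 (ordPrime_lt_ordPrime_of_evenOrd hβα hα)]
    exact Set.empty_subset _
  | odd h hβ _ ih =>
    rw [ordPrime_add_one_of_evenOrd hβ]
    exact ⟨finite_iterDeriv_diie_image_append h ih.1,
      fun hβ' => absurd hβ' (not_evenOrd_add_one_of_evenOrd hβ)⟩
  | @even α f Bs g _ hα hf hg _ ih =>
    have hroot : iterDeriv Diie (⋃ n, (f n ++ ·) '' Bs n) (ordPrime α) ⊆ {[]} := by
      refine (hf.iterDeriv_diie_iUnion_subset Bs _).trans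
        (Set.insert_subset_iff.mpr ⟨rfl, Set.iUnion_subset fun n => ?_⟩)
      rw [iterDeriv_diie_eq_empty_of_finite_of_lt (finite_iterDeriv_diie_image_append _ (ih n).1)
        (ordPrime_lt_ordPrime_of_evenOrd (hg n) hα)]
      exact Set.empty_subset _
    exact ⟨(Set.finite_singleton _).subset hroot, fun _ => hroot⟩

theorem length_seqPrefix (σ : ℕ → ℕ) (k : ℕ) : (seqPrefix σ k).length = k :=
  List.length_ofFn

theorem seqPrefix_prefix_seqPrefix (σ : ℕ → ℕ) {k l : ℕ} (hkl : k ≤ l) :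
    seqPrefix σ k <+: seqPrefix σ l := by
  rw [List.prefix_iff_eq_take]
  apply List.ext_getElem (by simp [length_seqPrefix, hkl])
  intro i _ _
  simp [seqPrefix]

theorem infExtends_seqAppend (w : List ℕ) (ν : ℕ → ℕ) : InfExtends w (seqAppend w ν) := by
  apply List.ext_getElem (length_seqPrefix _ _)
  intro i _ _
  simp [seqPrefix, seqAppend]

namespace InfExtends

variable {t u : List ℕ} {σ : ℕ → ℕ}

theorem prefix_of_length_le (ht : InfExtends t σ) (hu : InfExtends u σ)
    (hl : t.length ≤ u.length) : t <+: u := by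
  rw [← ht, ← hu]
  exact seqPrefix_prefix_seqPrefix σ hl

theorem prefix_or_prefix (ht : InfExtends t σ) (hu : InfExtends u σ) : t <+: u ∨ u <+: t :=
  (le_total t.length u.length).imp (ht.prefix_of_length_le hu) (hu.prefix_of_length_le ht)

theorem of_prefix (htu : t <+: u) (hu : InfExtends u σ) : InfExtends t σ := by
  have h : seqPrefix σ t.length <+: u := by
    rw [← hu]
    exact seqPrefix_prefix_seqPrefix σ htu.length_le
  exact (List.prefix_of_prefix_length_le h htu (by rw [length_seqPrefix])).eq_of_length
    (length_seqPrefix _ _)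

theorem getElem?_eq (ht : InfExtends t σ) {i : ℕ} (hi : i < t.length) : t[i]? = some (σ i) := by
  rw [← ht]
  simp [seqPrefix, hi]

end InfExtends

theorem infinite_setOf_infExtends_of_mem_diie {A : Set (ℕ → ℕ)} {t : List ℕ}
    (ht : t ∈ Diie (clTrInf A)) : {σ ∈ A | InfExtends t σ}.Infinite := by
  obtain ⟨-, g, hg, hinc⟩ := ht
  choose σ hσA hgσ using fun n => (hg n).1
  have hne : ∀ m n, m < n → σ m ≠ σ n := fun m n hmn hσ => by
    rcases (hgσ m).prefix_or_prefix (hσ ▸ hgσ n) with h | h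
    exacts [(hinc hmn).1 h, (hinc hmn).2.1 h]
  refine Set.infinite_of_injective_forall_mem (f := σ) (fun m n hmn => ?_)
    fun n => ⟨hσA n, InfExtends.of_prefix (hg n).2 (hgσ n)⟩
  by_contra hmn'
  rcases Nat.lt_or_gt_of_ne hmn' with h | h
  exacts [hne _ _ h hmn, hne _ _ h hmn.symm]

theorem IsForking.subsingleton_setOf_head?_eq {f : ℕ → List ℕ} (hf : IsForking f)
    (c : Option ℕ) : {n | (f n).head? = c}.Subsingleton := fun _ hm _ hn =>
  by_contra fun hmn => hf.2 hmn (hm.trans hn.symm)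

theorem IsBroomExtension.finite_setOf_infExtends {B : Set (List ℕ)} {A : Set (ℕ → ℕ)}
    (hA : IsBroomExtension B A) {t : List ℕ} (ht : t ∉ clTr B) :
    {σ ∈ A | InfExtends t σ}.Finite := by
  obtain ⟨f, ν, hf, rfl⟩ := hA
  have hprefixes : {s ∈ B | s <+: t}.Finite :=
    t.inits.finite_toSet.subset fun s hs => (List.mem_inits s t).mpr hs.2
  refine (hprefixes.biUnion fun s hs =>
    ((hf s hs.1).subsingleton_setOf_head?_eq t[s.length]?).finite.biUnion fun n _ =>
      Set.finite_singleton (seqAppend (s ++ f s n) (ν s n))).subset ?_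
  rintro _ ⟨⟨s, hs, n, rfl⟩, htσ⟩
  have hsσ : InfExtends s (seqAppend (s ++ f s n) (ν s n)) :=
    (infExtends_seqAppend _ _).of_prefix (List.prefix_append _ _)
  have hlt : s.length < t.length := by
    by_contra hle
    exact ht ⟨s, hs, htσ.prefix_of_length_le hsσ (not_lt.mp hle)⟩
  have hhead : (f s n).head? = t[s.length]? := by
    have hfork := (infExtends_seqAppend (s ++ f s n) (ν s n)).getElem?_eq (i := s.length)
      (by simpa using List.length_pos_iff.mpr ((hf s hs).1 n))
    rw [htσ.getElem?_eq hlt, ← hfork, List.getElem?_append_right le_rfl, Nat.sub_self,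
      List.head?_eq_getElem?]
  simp only [Set.mem_iUnion, Set.mem_singleton_iff]
  exact ⟨s, ⟨hs, hsσ.prefix_of_length_le htσ hlt.le⟩, n, hhead, rfl⟩

theorem IsBroomExtension.diie_clTrInf_subset {B : Set (List ℕ)} {A : Set (ℕ → ℕ)}
    (hA : IsBroomExtension B A) : Diie (clTrInf A) ⊆ clTr B := fun _ ht =>
  by_contra fun htB => infinite_setOf_infExtends_of_mem_diie ht (hA.finite_setOf_infExtends htB)

theorem broom_sets_rank_general (α : Ordinal.{0}) :
    (∀ B : Set (List ℕ), IsBroomB α B →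
      (iterDeriv Diie B (ordPrime α)).Finite ∧
      (EvenOrd α →
        iterDeriv Diie B (ordPrime α) = ∅ ∨
        iterDeriv Diie B (ordPrime α) = {([] : List ℕ)})) ∧
    (∀ A : Set (ℕ → ℕ), IsBroomA α A →
      (iterDeriv Diie (Diie (clTrInf A)) (ordPrime α)).Finite ∧
      (EvenOrd α →
        iterDeriv Diie (Diie (clTrInf A)) (ordPrime α) = ∅ ∨
        iterDeriv Diie (Diie (clTrInf A)) (ordPrime α) = {([] : List ℕ)})) := by
  refine ⟨fun B hB => ?_, fun A ⟨B, hB, hA⟩ => ?_⟩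
  · obtain ⟨hfin, hroot⟩ := hB.iterDeriv_diie_ordPrime
    exact ⟨hfin, fun hα => Set.subset_singleton_iff_eq.mp (hroot hα)⟩
  · have hsub :
        iterDeriv Diie (Diie (clTrInf A)) (ordPrime α) ⊆ iterDeriv Diie B (ordPrime α) :=
      iterDeriv_mono_of_subset_clTr diie_mono hA.diie_clTrInf_subset _
    obtain ⟨hfin, hroot⟩ := hB.iterDeriv_diie_ordPrime
    exact ⟨hfin.subset hsub, fun hα => Set.subset_singleton_iff_eq.mp (hsub.trans (hroot hα))⟩

/-- Rank of broom sets: for `α ≤ ω₁` with `α' = ordPrime α`: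
(1) for `B ∈ B_α`, `D_iie^{α'}(B)` is finite, and for even `α` it is empty or `{∅}`;
(2) for `A ∈ A_α`, `D_iie^{α'}(D_iie(A))` is finite, and for even `α` it is empty
or `{∅}`. -/
theorem broom_sets_rank (α : Ordinal.{0}) (hα : α ≤ omega1) :
    (∀ B : Set (List ℕ), IsBroomB α B →
      (iterDeriv Diie B (ordPrime α)).Finite ∧
      (EvenOrd α →
        iterDeriv Diie B (ordPrime α) = ∅ ∨
        iterDeriv Diie B (ordPrime α) = {([] : List ℕ)})) ∧
    (∀ A : Set (ℕ → ℕ), IsBroomA α A →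
      (iterDeriv Diie (Diie (clTrInf A)) (ordPrime α)).Finite ∧
      (EvenOrd α →
        iterDeriv Diie (Diie (clTrInf A)) (ordPrime α) = ∅ ∨
        iterDeriv Diie (Diie (clTrInf A)) (ordPrime α) = {([] : List ℕ)})) :=
  broom_sets_rank_general α

end FBorelPaper
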